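/- Suppose (B,i,j) is a stable ADHM datum with μ(B,i,j) = 0 such that for every vertex k ∈ I the linear map τ_k : (⊕_{h∈H : in(h)=k} V_{out(h)}) ⊕ W_k → V_k defined by τ_k((v_h)_h, w) = Σ_{h : in(h)=k} ε(h) B_h(v_h) + i_k(w) is surjective. Then for every k ∈ I one has Σ_{h∈H : in(h)=k} dim V_{out(h)} + dim W_k − 2·dim V_k ≥ 0; that is, the weight w − v = Σ_k (dim W_k)·Λ_k − Σ_k (dim V_k)·α_k is dominant. (If the regular locus of the affine quiver variety M_0(v,w) is nonempty, then w − v is dominant.) -/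
import Mathlib


noncomputable section

/-- The data of a finite graph without edge loops, presented by its set `H` of oriented
edges over the vertex set `I`: source and target maps `src`, `tgt`, and a fixed-point-free
orientation-reversing involution `bar`. -/
structure GraphData (I H : Type) where
  src : H → I
  tgt : H → I
  bar : H → H
  bar_invol : ∀ h, bar (bar h) = h
  bar_ne_self : ∀ h, bar h ≠ h
  src_bar : ∀ h, src (bar h) = tgt h
  tgt_bar : ∀ h, tgt (bar h) = src h
  no_loops : ∀ h, src h ≠ tgt h

/-- Transport of the fibres of a family of normed spaces along an equality of indices. -/
def vCast {I : Type} (V : I → Type)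
    [∀ k, NormedAddCommGroup (V k)] [∀ k, NormedSpace ℂ (V k)]
    {k l : I} (e : k = l) : V k ≃L[ℂ] V l := by
  subst e
  exact ContinuousLinearEquiv.refl ℂ (V k)

/-- Stability of an ADHM datum `(B, i, j)`: the only family of subspaces `S k ⊆ V k`
which is `B`-invariant and contained in `ker (j k)` is the zero family. -/
def IsStable {I H : Type} (G : GraphData I H) (V W : I → Type)
    [∀ k, NormedAddCommGroup (V k)] [∀ k, NormedSpace ℂ (V k)]
    [∀ k, NormedAddCommGroup (W k)] [∀ k, NormedSpace ℂ (W k)]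
    (B : ∀ h : H, V (G.src h) →L[ℂ] V (G.tgt h))
    (j : ∀ k : I, V k →L[ℂ] W k) : Prop :=
  ∀ S : ∀ k : I, Submodule ℂ (V k),
    (∀ h : H, ∀ x ∈ S (G.src h), B h x ∈ S (G.tgt h)) →
    (∀ k : I, ∀ x ∈ S k, j k x = 0) →
    ∀ k : I, S k = ⊥

/-- For an oriented edge `h`, the composite `A ∘ A'` of a map `A` along `h` and a map `A'`
along `bar h`, as an endomorphism of `V (tgt h)`. -/
def barComp {I H : Type} (G : GraphData I H) (V : I → Type)
    [∀ k, NormedAddCommGroup (V k)] [∀ k, NormedSpace ℂ (V k)] (h : H)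
    (A : V (G.src h) →L[ℂ] V (G.tgt h))
    (A' : V (G.src (G.bar h)) →L[ℂ] V (G.tgt (G.bar h))) :
    V (G.tgt h) →L[ℂ] V (G.tgt h) :=
  A.comp ((vCast V (G.tgt_bar h) : V (G.tgt (G.bar h)) →L[ℂ] V (G.src h)).comp
    (A'.comp ((vCast V (G.src_bar h)).symm : V (G.tgt h) →L[ℂ] V (G.src (G.bar h)))))

/-- The `k`-th component of the moment map `μ(B, i, j) = ε B B + i j`. -/
def momentMap {I H : Type} [Fintype H] [DecidableEq I] (G : GraphData I H)
    (V W : I → Type)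
    [∀ k, NormedAddCommGroup (V k)] [∀ k, NormedSpace ℂ (V k)]
    [∀ k, NormedAddCommGroup (W k)] [∀ k, NormedSpace ℂ (W k)]
    (ε : H → ℂ)
    (B : ∀ h : H, V (G.src h) →L[ℂ] V (G.tgt h))
    (i : ∀ k : I, W k →L[ℂ] V k) (j : ∀ k : I, V k →L[ℂ] W k) (k : I) :
    V k →L[ℂ] V k :=
  (∑ h : H, if e : G.tgt h = k then
      ((vCast V e : V (G.tgt h) →L[ℂ] V k).comp
        ((ε h • barComp G V h (B h) (B (G.bar h))).comp
          ((vCast V e).symm : V k →L[ℂ] V (G.tgt h))))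
    else 0)
    + (i k).comp (j k)

section Aux

variable {I : Type} (V : I → Type)
    [∀ k, NormedAddCommGroup (V k)] [∀ k, NormedSpace ℂ (V k)]

lemma vCast_rfl {k : I} (x : V k) : vCast V rfl x = x := rfl

lemma vCast_trans {k l m : I} (e : k = l) (e' : l = m) (x : V k) :
    vCast V e' (vCast V e x) = vCast V (e.trans e') x := by subst e; subst e'; rfl

lemma vCast_symm_apply {k l : I} (e : k = l) (x : V l) :
    (vCast V e).symm x = vCast V e.symm x := by subst e; rfl

lemma vCast_eq_zero_iff {k l : I} (e : k = l) (x : V k) : vCast V e x = 0 ↔ x = 0 := by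
  subst e; exact Iff.rfl

lemma B_congr {H : Type} (G : GraphData I H)
    (B : ∀ h : H, V (G.src h) →L[ℂ] V (G.tgt h)) {h1 h2 : H} (e : h1 = h2)
    (x : V (G.src h1)) :
    B h2 (vCast V (congrArg G.src e) x) = vCast V (congrArg G.tgt e) (B h1 x) := by
  subst e; rfl

lemma sum_dite_zero {α M : Type*} [Fintype α] [AddCommMonoid M] (p : α → Prop)
    [DecidablePred p] (f : ∀ a, p a → M) :
    ∑ a, (if h : p a then f a h else 0) = ∑ a : {a // p a}, f a.1 a.2 := by
  classical
  rw [← Finset.sum_filter_add_sum_filter_not Finset.univ p,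
    Finset.sum_dite_of_true (fun i hi => (Finset.mem_filter.mp hi).2),
    Finset.sum_dite_of_false (fun i hi => (Finset.mem_filter.mp hi).2)]
  simp only [Finset.sum_const_zero, add_zero]
  exact Fintype.sum_equiv (Equiv.subtypeEquivRight (by simp)) _ _ (fun x => rfl)

end Aux

/-- Suppose `(B, i, j)` is a stable ADHM datum with `μ(B,i,j) = 0` such
that for every vertex `k` the map `τ_k : (⊕_{h:in(h)=k} V_{out(h)}) ⊕ W_k → V_k`,
`((v_h)_h, w) ↦ Σ ε(h) B_h(v_h) + i_k(w)`, is surjective. Then for every `k`,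
`Σ_{h:in(h)=k} dim V_{out(h)} + dim W_k − 2 dim V_k ≥ 0`, i.e. `w − v` is dominant. -/
theorem statement7
    {I H : Type} [Fintype I] [Fintype H] [DecidableEq I]
    (G : GraphData I H) (V W : I → Type)
    [∀ k, NormedAddCommGroup (V k)] [∀ k, NormedSpace ℂ (V k)]
    [∀ k, FiniteDimensional ℂ (V k)]
    [∀ k, NormedAddCommGroup (W k)] [∀ k, NormedSpace ℂ (W k)]
    [∀ k, FiniteDimensional ℂ (W k)]
    (ε : H → ℂ) (hε0 : ∀ h, ε h ≠ 0) (hεbar : ∀ h, ε (G.bar h) = - ε h)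
    (B : ∀ h : H, V (G.src h) →L[ℂ] V (G.tgt h))
    (i : ∀ k : I, W k →L[ℂ] V k) (j : ∀ k : I, V k →L[ℂ] W k)
    (hst : IsStable G V W B j)
    (hμ : ∀ k : I, momentMap G V W ε B i j k = 0)
    (hτ : ∀ k : I, Function.Surjective (fun p :
        (∀ h : {h : H // G.tgt h = k}, V (G.src h.1)) × W k =>
      (∑ h : {h : H // G.tgt h = k}, ε h.1 • (vCast V h.2) (B h.1 (p.1 h)))
        + i k p.2)) :
    ∀ k : I, 2 * Module.finrank ℂ (V k) ≤
      (∑ h ∈ Finset.univ.filter (fun h : H => G.tgt h = k),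
        Module.finrank ℂ (V (G.src h))) + Module.finrank ℂ (W k) := by
  intro k
  classical
  -- the linear map τ_k
  let T : ((∀ h : {h : H // G.tgt h = k}, V (G.src h.1)) × W k) →ₗ[ℂ] V k :=
    { toFun := fun p =>
        (∑ h : {h : H // G.tgt h = k}, ε h.1 • (vCast V h.2) (B h.1 (p.1 h))) + i k p.2
      map_add' := by
        intro p q
        simp only [Prod.fst_add, Pi.add_apply, map_add, smul_add,
          Finset.sum_add_distrib, Prod.snd_add]
        abel
      map_smul' := by
        intro c p
        simp only [Prod.smul_fst, Pi.smul_apply, map_smul, Prod.smul_snd,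
          RingHom.id_apply, smul_add, Finset.smul_sum]
        congr 1
        exact Finset.sum_congr rfl fun h _ => (smul_comm c (ε h.1) _).symm }
  -- the linear map σ_k
  let σ : V k →ₗ[ℂ] ((∀ h : {h : H // G.tgt h = k}, V (G.src h.1)) × W k) :=
    { toFun := fun v =>
        (fun h => vCast V (G.tgt_bar h.1) (B (G.bar h.1)
          ((vCast V ((G.src_bar h.1).trans h.2)).symm v)), j k v)
      map_add' := by
        intro v w
        refine Prod.ext ?_ ?_
        · funext h; simp
        · simp
      map_smul' := by
        intro c v
        refine Prod.ext ?_ ?_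
        · funext h; simp
        · simp }
  have hTsurj : Function.Surjective T := hτ k
  -- T ∘ σ = 0 since μ = 0
  have hTσ : ∀ v : V k, T (σ v) = 0 := by
    intro v
    have h0 : momentMap G V W ε B i j k v = 0 := by rw [hμ k]; rfl
    rw [← h0]
    show (∑ h : {h : H // G.tgt h = k}, ε h.1 • vCast V h.2 (B h.1
        (vCast V (G.tgt_bar h.1) (B (G.bar h.1)
          ((vCast V ((G.src_bar h.1).trans h.2)).symm v))))) + i k (j k v) = _
    rw [momentMap, ContinuousLinearMap.add_apply, ContinuousLinearMap.sum_apply,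
      Finset.sum_congr rfl (fun h _ => apply_dite (fun f : V k →L[ℂ] V k => f v) _ _ _)]
    simp only [ContinuousLinearMap.zero_apply]
    rw [sum_dite_zero (fun h : H => G.tgt h = k)]
    congr 1
    refine Finset.sum_congr rfl fun h _ => ?_
    have harg : (vCast V ((G.src_bar h.1).trans h.2)).symm v
        = (vCast V (G.src_bar h.1)).symm ((vCast V h.2).symm v) := by
      rw [vCast_symm_apply, vCast_symm_apply, vCast_symm_apply, vCast_trans]
    rw [harg]
    simp only [ContinuousLinearMap.coe_comp', Function.comp_apply,
      ContinuousLinearMap.smul_apply, barComp, map_smul,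
      ContinuousLinearEquiv.coe_coe]
  have hrange : LinearMap.range σ ≤ LinearMap.ker T := by
    rintro x ⟨v, rfl⟩
    exact hTσ v
  -- σ is injective, by stability
  have hinj : Function.Injective σ := by
    rw [← LinearMap.ker_eq_bot]
    have hSk := hst (fun l => if e : k = l then
        (LinearMap.ker σ).map (vCast V e).toLinearEquiv.toLinearMap else ⊥)
      ?_ ?_ k
    · have hSk2 : (if e : k = k then (LinearMap.ker σ).map
          (vCast V e).toLinearEquiv.toLinearMap else ⊥) = (⊥ : Submodule ℂ (V k)) := hSk
      rw [dif_pos rfl] at hSk2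
      rw [eq_bot_iff]
      intro x hx
      exact hSk2 ▸ ⟨x, hx, rfl⟩
    · -- B-invariance
      intro h x hx
      by_cases e : k = G.src h
      · simp only [dif_pos e] at hx
        obtain ⟨y, hyK, rfl⟩ := hx
        have ekt : ¬ (k = G.tgt h) := fun e' => G.no_loops h (e.symm.trans e')
        simp only [dif_neg ekt, Submodule.mem_bot]
        show B h (vCast V e y) = 0
        have hy : σ y = 0 := hyK
        have pf : G.tgt (G.bar h) = k := (G.tgt_bar h).trans e.symm
        have hcomp : vCast V (G.tgt_bar (G.bar h)) ((B (G.bar (G.bar h)))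
            ((vCast V ((G.src_bar (G.bar h)).trans pf)).symm y)) = 0 := by
          have h2 : (σ y).1 ⟨G.bar h, pf⟩ = 0 := by rw [hy]; rfl
          exact h2
        rw [vCast_eq_zero_iff] at hcomp
        have key := B_congr V G B (G.bar_invol h)
          ((vCast V ((G.src_bar (G.bar h)).trans pf)).symm y)
        rw [hcomp, map_zero] at key
        rw [show vCast V e y = vCast V (congrArg G.src (G.bar_invol h))
            ((vCast V ((G.src_bar (G.bar h)).trans pf)).symm y) from by
          rw [vCast_symm_apply, vCast_trans], key]
      · simp only [dif_neg e, Submodule.mem_bot] at hx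
        subst hx
        rw [map_zero]
        exact Submodule.zero_mem _
    · -- contained in ker j
      intro l x hx
      by_cases e : k = l
      · subst e
        simp only [dif_pos rfl] at hx
        obtain ⟨y, hyK, rfl⟩ := hx
        have hy : σ y = 0 := hyK
        exact congrArg Prod.snd hy
      · simp only [dif_neg e, Submodule.mem_bot] at hx
        subst hx
        exact map_zero _
  -- dimension count
  have hrn := LinearMap.finrank_range_add_finrank_ker T
  have h1 : Module.finrank ℂ (LinearMap.range T) = Module.finrank ℂ (V k) := by
    rw [LinearMap.range_eq_top.mpr hTsurj, finrank_top]
  have h2 : Module.finrank ℂ (V k) ≤ Module.finrank ℂ (LinearMap.ker T) := by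
    rw [← LinearMap.finrank_range_of_inj hinj]
    exact Submodule.finrank_mono hrange
  have hd : Module.finrank ℂ
        ((∀ h : {h : H // G.tgt h = k}, V (G.src h.1)) × W k)
      = (∑ h : {h : H // G.tgt h = k}, Module.finrank ℂ (V (G.src h.1)))
        + Module.finrank ℂ (W k) := by
    rw [Module.finrank_prod, Module.finrank_pi_fintype]
  have hfilter : (∑ h ∈ Finset.univ.filter (fun h : H => G.tgt h = k),
      Module.finrank ℂ (V (G.src h)))
      = ∑ h : {h : H // G.tgt h = k}, Module.finrank ℂ (V (G.src h.1)) :=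
    Finset.sum_subtype _ (by simp) _
  rw [hfilter, ← hd, ← hrn, h1]
  omega
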